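/- arXiv:2012.13800 — 6 statements merged into one kernel-verified Lean document; each statement's English description precedes it below -/
import Mathlib

section
/- Let X and Y be compact Hausdorff spaces and let τ be an ordinal of uncountable cofinality. If C_p(X × [0,τ)) is homeomorphic to C_p(Y × [0,τ)), then C_p(X × [0,τ]) is homeomorphic to C_p(Y × [0,τ]). -/
open Cardinal Set

universe u

/-- `Cp X` : the space of continuous real-valued functions on `X` with the topology of
pointwise convergence (subspace topology inherited from the product `ℝ^X`). -/
abbrev Cp (X : Type*) [TopologicalSpace X] := {f : X → ℝ // Continuous f}

namespace Statement6Aux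

variable {τ : Ordinal.{u}}

theorem tau_isLimit (hτ : ℵ₀ < Ordinal.cof τ) : Order.IsSuccLimit τ :=
  Ordinal.aleph0_le_cof.mp hτ.le

theorem tau_pos (hτ : ℵ₀ < Ordinal.cof τ) : (0 : Ordinal.{u}) < τ :=
  (tau_isLimit hτ).pos

theorem mem_Iic_of_mem_Iio {a : Ordinal.{u}} (h : a ∈ Set.Iio τ) : a ∈ Set.Iic τ :=
  Set.mem_Iic.mpr (le_of_lt (Set.mem_Iio.mp h))

theorem mem_Iio_min {a : Ordinal.{u}} (β : ↥(Set.Iio τ)) : min a β.1 ∈ Set.Iio τ :=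
  Set.mem_Iio.mpr (lt_of_le_of_lt (min_le_right _ _) (Set.mem_Iio.mp β.2))

theorem sup_lt (hτ : ℵ₀ < Ordinal.cof τ) (g : ℕ → Ordinal.{u}) (hg : ∀ n, g n < τ) :
    (⨆ n, g n) < τ :=
  Ordinal.iSup_lt_ord_lift (by simpa using hτ) hg

theorem isLUB_Iio' (hτ : ℵ₀ < Ordinal.cof τ) : IsLUB (Set.Iio τ) τ := by
  constructor
  · exact fun b hb => le_of_lt hb
  · intro b hb
    by_contra hbτ
    push_neg at hbτ
    have h1 : Order.succ b < τ := (tau_isLimit hτ).succ_lt hbτ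
    exact absurd (hb h1) (Order.lt_succ b).not_ge

section Maps

variable {X : Type u} [TopologicalSpace X]

/-- the embedding `X × [0,τ) → X × [0,τ]` -/
def emb (p : X × ↥(Set.Iio τ)) : X × ↥(Set.Iic τ) :=
  (p.1, ⟨p.2.1, mem_Iic_of_mem_Iio p.2.2⟩)

theorem continuous_emb : Continuous (emb (X := X) (τ := τ)) :=
  continuous_fst.prodMk
    (Continuous.subtype_mk (continuous_subtype_val.comp continuous_snd) _)

/-- restriction map `Cp (X × [0,τ]) → Cp (X × [0,τ))` -/
def res (f : Cp (X × ↥(Set.Iic τ))) : Cp (X × ↥(Set.Iio τ)) :=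
  ⟨fun p => f.1 (emb p), f.2.comp continuous_emb⟩

theorem continuous_res : Continuous (res (X := X) (τ := τ)) := by
  apply Continuous.subtype_mk
  exact continuous_pi fun p => (continuous_apply (emb p)).comp continuous_subtype_val

/-- truncation at `β` -/
noncomputable def mm (β : ↥(Set.Iio τ)) (a : ↥(Set.Iic τ)) : ↥(Set.Iio τ) :=
  ⟨min a.1 β.1, mem_Iio_min β⟩

theorem continuous_mm (β : ↥(Set.Iio τ)) : Continuous (mm (τ := τ) β) :=
  Continuous.subtype_mk (continuous_subtype_val.min continuous_const) _

/-- extension map given a stabilization point `β` -/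
noncomputable def extend (f : Cp (X × ↥(Set.Iio τ))) (β : ↥(Set.Iio τ)) : Cp (X × ↥(Set.Iic τ)) :=
  ⟨fun p => f.1 (p.1, mm β p.2),
    f.2.comp (continuous_fst.prodMk ((continuous_mm β).comp continuous_snd))⟩

end Maps

section Stab

variable {X : Type u} [TopologicalSpace X]

/-- a continuous map from `[0,τ)` to a metric space is eventually constant -/
theorem stab_metric {M : Type*} [MetricSpace M] (hτ : ℵ₀ < Ordinal.cof τ)
    (F : C(↥(Set.Iio τ), M)) :
    ∃ β : ↥(Set.Iio τ), ∀ γ : ↥(Set.Iio τ), β ≤ γ → F γ = F β := by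
  have h0 : (0 : Ordinal.{u}) < τ := tau_pos hτ
  -- Step 1 : approximate stabilization
  have step1 : ∀ ε : ℝ, 0 < ε → ∃ β : ↥(Set.Iio τ),
      ∀ γ : ↥(Set.Iio τ), β ≤ γ → dist (F γ) (F β) ≤ ε := by
    intro ε hε
    by_contra hcon
    push_neg at hcon
    choose nxt hle hd using hcon
    set a : ℕ → ↥(Set.Iio τ) := fun n => nxt^[n] ⟨0, h0⟩ with ha
    have hsucc : ∀ n, a (n + 1) = nxt (a n) := by
      intro n
      rw [ha]
      exact Function.iterate_succ_apply' nxt n _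
    have hmono : Monotone a := by
      apply monotone_nat_of_le_succ
      intro n
      rw [hsucc n]
      exact hle (a n)
    have hba : BddAbove (Set.range fun n => (a n).1) :=
      ⟨τ, forall_mem_range.2 fun n => (a n).2.le⟩
    have hsup : (⨆ n, (a n).1) < τ := sup_lt hτ _ fun n => (a n).2
    have hlub : IsLUB (Set.range fun n => (a n).1) (⨆ n, (a n).1) := isLUB_ciSup hba
    have htend : Filter.Tendsto a Filter.atTop (nhds (⟨_, hsup⟩ : ↥(Set.Iio τ))) :=
      tendsto_subtype_rng.2 (tendsto_atTop_isLUB (fun m n h => hmono h) hlub)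
    have htend2 := (F.continuous.tendsto _).comp htend
    rw [Metric.tendsto_atTop] at htend2
    obtain ⟨N, hN⟩ := htend2 (ε / 2) (by positivity)
    have h1 := hN N le_rfl
    have h2 := hN (N + 1) (Nat.le_succ N)
    have h3 := hd (a N)
    rw [← hsucc N] at h3
    have h4 : dist (F (a (N + 1))) (F (a N)) ≤
        dist (F (a (N + 1))) (F ⟨_, hsup⟩) + dist (F ⟨_, hsup⟩) (F (a N)) :=
      dist_triangle _ _ _
    have h5 : dist (F ⟨_, hsup⟩) (F (a N)) = dist ((F ∘ a) N) (F ⟨_, hsup⟩) := by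
      simp [Function.comp, dist_comm]
    simp only [Function.comp] at h1 h2
    rw [h5] at h4
    simp only [Function.comp] at h4
    linarith
  -- Step 2 : combine
  choose βf hβf using fun n : ℕ => step1 (1 / ((n : ℝ) + 1)) (by positivity)
  have hba : BddAbove (Set.range fun n => (βf n).1) :=
    ⟨τ, forall_mem_range.2 fun n => (βf n).2.le⟩
  have hb : (⨆ n, (βf n).1) < τ := sup_lt hτ _ fun n => (βf n).2
  refine ⟨⟨_, hb⟩, ?_⟩
  intro γ hγ
  have key : ∀ n : ℕ, dist (F γ) (F ⟨_, hb⟩) ≤ 2 / ((n : ℝ) + 1) := by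
    intro n
    have hbn : βf n ≤ (⟨_, hb⟩ : ↥(Set.Iio τ)) := le_ciSup hba n
    have h1 := hβf n γ (le_trans hbn hγ)
    have h2 := hβf n ⟨_, hb⟩ hbn
    have h4 : dist (F γ) (F ⟨_, hb⟩) ≤
        dist (F γ) (F (βf n)) + dist (F (βf n)) (F ⟨_, hb⟩) := dist_triangle _ _ _
    rw [dist_comm (F (βf n))] at h4
    have : (1 : ℝ) / ((n : ℝ) + 1) + 1 / ((n : ℝ) + 1) = 2 / ((n : ℝ) + 1) := by ring
    linarith
  have hle0 : dist (F γ) (F ⟨_, hb⟩) ≤ 0 := by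
    by_contra hpos
    push_neg at hpos
    obtain ⟨n, hn⟩ := exists_nat_gt (2 / dist (F γ) (F ⟨_, hb⟩))
    have h1 : 2 / dist (F γ) (F ⟨_, hb⟩) < (n : ℝ) + 1 := hn.trans (lt_add_one _)
    have h2 : 2 / ((n : ℝ) + 1) < dist (F γ) (F ⟨_, hb⟩) := by
      rw [div_lt_iff₀ hpos] at h1
      rw [div_lt_iff₀ (by positivity)]
      linarith
    exact absurd (key n) (not_le.2 h2)
  exact dist_le_zero.1 hle0

/-- stabilization for continuous functions on `X × [0,τ)`, `X` compact -/
theorem stab [CompactSpace X] (hτ : ℵ₀ < Ordinal.cof τ) (f : Cp (X × ↥(Set.Iio τ))) :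
    ∃ β : ↥(Set.Iio τ), ∀ γ : ↥(Set.Iio τ), β ≤ γ → ∀ x : X, f.1 (x, γ) = f.1 (x, β) := by
  let fc : C(↥(Set.Iio τ) × X, ℝ) :=
    ⟨fun q => f.1 (q.2, q.1), f.2.comp (continuous_snd.prodMk continuous_fst)⟩
  obtain ⟨β, hβ⟩ := stab_metric hτ fc.curry
  refine ⟨β, fun γ hγ x => ?_⟩
  have h1 := hβ γ hγ
  have h2 := DFunLike.congr_fun h1 x
  simpa [fc, ContinuousMap.curry_apply] using h2

theorem res_extend [CompactSpace X] (f : Cp (X × ↥(Set.Iio τ))) (β : ↥(Set.Iio τ))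
    (hβ : ∀ γ : ↥(Set.Iio τ), β ≤ γ → ∀ x : X, f.1 (x, γ) = f.1 (x, β)) :
    res (extend f β) = f := by
  apply Subtype.ext
  funext p
  show f.1 (p.1, mm β ⟨p.2.1, mem_Iic_of_mem_Iio p.2.2⟩) = f.1 p
  rcases le_or_gt p.2.1 β.1 with h | h
  · have h1 : mm β ⟨p.2.1, mem_Iic_of_mem_Iio p.2.2⟩ = p.2 := Subtype.ext (min_eq_left h)
    rw [h1]
  · have h1 : mm β ⟨p.2.1, mem_Iic_of_mem_Iio p.2.2⟩ = β := Subtype.ext (min_eq_right h.le)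
    rw [h1, ← hβ p.2 h.le p.1]

theorem res_inj (hτ : ℵ₀ < Ordinal.cof τ) :
    Function.Injective (res (X := X) (τ := τ)) := by
  intro f g hfg
  apply Subtype.ext
  have hdense : Dense (Set.range (emb (X := X) (τ := τ))) := by
    have hemb : emb (X := X) (τ := τ) =
        Prod.map id (fun α : ↥(Set.Iio τ) => (⟨α.1, mem_Iic_of_mem_Iio α.2⟩ : ↥(Set.Iic τ))) := rfl
    rw [dense_iff_closure_eq, hemb, Set.range_prodMap, closure_prod_eq, Set.range_id,
      closure_univ]
    have hsub : closure (Set.range fun α : ↥(Set.Iio τ) =>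
        (⟨α.1, mem_Iic_of_mem_Iio α.2⟩ : ↥(Set.Iic τ))) = Set.univ := by
      apply Set.eq_univ_of_forall
      intro a
      rcases lt_or_eq_of_le (Set.mem_Iic.mp a.2) with hlt | heq
      · exact subset_closure ⟨⟨a.1, hlt⟩, rfl⟩
      · rw [closure_subtype]
        have himg : (Subtype.val '' Set.range fun α : ↥(Set.Iio τ) =>
            (⟨α.1, mem_Iic_of_mem_Iio α.2⟩ : ↥(Set.Iic τ))) = Set.Iio τ := by
          ext b
          constructor
          · rintro ⟨c, ⟨d, rfl⟩, rfl⟩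
            exact d.2
          · intro hb
            exact ⟨⟨b, mem_Iic_of_mem_Iio hb⟩, ⟨⟨b, hb⟩, rfl⟩, rfl⟩
        rw [himg, heq]
        exact (isLUB_Iio' hτ).mem_closure ⟨0, tau_pos hτ⟩
    rw [hsub, Set.univ_prod_univ]
  refine Continuous.ext_on hdense f.2 g.2 ?_
  rintro p ⟨q, rfl⟩
  exact congr_fun (congrArg Subtype.val hfg) q

theorem res_surj [CompactSpace X] (hτ : ℵ₀ < Ordinal.cof τ) :
    Function.Surjective (res (X := X) (τ := τ)) := by
  intro g
  obtain ⟨β, hβ⟩ := stab hτ g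
  exact ⟨extend g β, res_extend g β hβ⟩

/-- stabilization for continuous functions on `X × [0,τ]` -/
theorem stabIic [CompactSpace X] (hτ : ℵ₀ < Ordinal.cof τ) (f : Cp (X × ↥(Set.Iic τ))) :
    ∃ β : ↥(Set.Iio τ), ∀ a : ↥(Set.Iic τ), β.1 ≤ a.1 → ∀ x : X,
      f.1 (x, a) = f.1 (x, ⟨β.1, mem_Iic_of_mem_Iio β.2⟩) := by
  obtain ⟨β, hβ⟩ := stab hτ (res f)
  have hfe : extend (res f) β = f := res_inj hτ (res_extend (res f) β hβ)
  refine ⟨β, fun a ha x => ?_⟩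
  have h3 : mm β a = β := Subtype.ext (min_eq_right ha)
  have h4 : mm β (⟨β.1, mem_Iic_of_mem_Iio β.2⟩ : ↥(Set.Iic τ)) = β := Subtype.ext (min_self _)
  calc f.1 (x, a) = (extend (res f) β).1 (x, a) := by rw [hfe]
    _ = (res f).1 (x, mm β a) := rfl
    _ = (res f).1 (x, β) := by rw [h3]
    _ = (res f).1 (x, mm β ⟨β.1, mem_Iic_of_mem_Iio β.2⟩) := by rw [h4]
    _ = (extend (res f) β).1 (x, ⟨β.1, mem_Iic_of_mem_Iio β.2⟩) := rfl
    _ = f.1 (x, ⟨β.1, mem_Iic_of_mem_Iio β.2⟩) := by rw [hfe]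

end Stab

section Closure

/-- characterization of closure in `Cp K` -/
theorem mem_closure_cp {K : Type*} [TopologicalSpace K] {A : Set (Cp K)} {f : Cp K} :
    f ∈ closure A ↔ ∀ s : Finset K, ∀ ε : ℝ, 0 < ε →
      ∃ g ∈ A, ∀ x ∈ s, |f.1 x - g.1 x| < ε := by
  constructor
  · intro h s ε hε
    have hV : IsOpen {g : Cp K | ∀ x ∈ s, |f.1 x - g.1 x| < ε} := by
      have heq : {g : Cp K | ∀ x ∈ s, |f.1 x - g.1 x| < ε} =
          Subtype.val ⁻¹' (⋂ x ∈ s, {h : K → ℝ | |f.1 x - h x| < ε}) := by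
        ext g; simp
      rw [heq]
      apply IsOpen.preimage continuous_subtype_val
      apply isOpen_biInter_finset
      intro x _
      have : {h : K → ℝ | |f.1 x - h x| < ε} =
          (fun h : K → ℝ => h x) ⁻¹' {y : ℝ | |f.1 x - y| < ε} := rfl
      rw [this]
      exact (isOpen_lt ((continuous_const.sub continuous_id).abs) continuous_const).preimage
        (continuous_apply x)
    obtain ⟨g, hgV, hgA⟩ := mem_closure_iff.1 h _ hV (by simp [hε])
    exact ⟨g, hgA, hgV⟩
  · intro H
    rw [mem_closure_iff]
    intro o ho hfo
    obtain ⟨O, hO, rfl⟩ := isOpen_induced_iff.1 ho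
    obtain ⟨I, uu, hIu, hsub⟩ := isOpen_pi_iff.1 hO f.1 hfo
    choose! εx hεx hball using fun x (hx : x ∈ I) =>
      Metric.isOpen_iff.1 (hIu x hx).1 (f.1 x) (hIu x hx).2
    by_cases hI : I.Nonempty
    · have hε : 0 < I.inf' hI εx := (Finset.lt_inf'_iff hI).2 fun i hi => hεx i hi
      obtain ⟨g, hgA, hg⟩ := H I _ hε
      refine ⟨g, ?_, hgA⟩
      apply hsub
      intro x hx
      apply hball x hx
      rw [Metric.mem_ball, Real.dist_eq, abs_sub_comm]
      exact lt_of_lt_of_le (hg x hx) (Finset.inf'_le _ hx)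
    · obtain ⟨g, hgA, _⟩ := H ∅ 1 one_pos
      refine ⟨g, hsub ?_, hgA⟩
      intro x hx
      exact absurd hx (by simp [Finset.not_nonempty_iff_eq_empty.1 hI])

/-- countable tightness of `Cp K` for compact `K` (Arhangelskii) -/
theorem tight {K : Type*} [TopologicalSpace K] [CompactSpace K] {A : Set (Cp K)} {f : Cp K}
    (hf : f ∈ closure A) : ∃ B ⊆ A, B.Countable ∧ f ∈ closure B := by
  classical
  have hchar := mem_closure_cp.1 hf
  have key : ∀ m n : ℕ, ∃ t : Finset (Cp K), ↑t ⊆ A ∧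
      ∀ v : Fin m → K, ∃ g ∈ t, ∀ i, |f.1 (v i) - g.1 (v i)| < 1 / ((n : ℝ) + 1) := by
    intro m n
    have hεp : (0 : ℝ) < 1 / ((n : ℝ) + 1) := by positivity
    set V : ↥A → Set (Fin m → K) :=
      fun g => {v | ∀ i, |f.1 (v i) - g.1.1 (v i)| < 1 / ((n : ℝ) + 1)} with hV
    have hVopen : ∀ g, IsOpen (V g) := by
      intro g
      have heq : V g = ⋂ i, (fun v : Fin m → K => v i) ⁻¹'
          {p : K | |f.1 p - g.1.1 p| < 1 / ((n : ℝ) + 1)} := by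
        ext v; simp [hV]
      rw [heq]
      exact isOpen_iInter_of_finite fun i =>
        (isOpen_lt ((f.2.sub g.1.2).abs) continuous_const).preimage (continuous_apply i)
    have hcover : (Set.univ : Set (Fin m → K)) ⊆ ⋃ g, V g := by
      intro v _
      obtain ⟨g, hgA, hg⟩ := hchar (Finset.image v Finset.univ) _ hεp
      exact Set.mem_iUnion.2 ⟨⟨g, hgA⟩,
        fun i => hg (v i) (Finset.mem_image_of_mem v (Finset.mem_univ i))⟩
    obtain ⟨t, ht⟩ := isCompact_univ.elim_finite_subcover V hVopen hcover
    refine ⟨t.image (fun g => g.1), ?_, ?_⟩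
    · intro g hg
      simp only [Finset.coe_image, Set.mem_image] at hg
      obtain ⟨a, _, rfl⟩ := hg
      exact a.2
    · intro v
      have := ht (Set.mem_univ v)
      rw [Set.mem_iUnion₂] at this
      obtain ⟨g, hgt, hgv⟩ := this
      exact ⟨g.1, Finset.mem_image_of_mem _ hgt, hgv⟩
  choose t htA htc using key
  refine ⟨⋃ m, ⋃ n, (t m n : Set (Cp K)), ?_, ?_, ?_⟩
  · intro g hg
    simp only [Set.mem_iUnion] at hg
    obtain ⟨m, n, h⟩ := hg
    exact htA m n h
  · exact Set.countable_iUnion fun m => Set.countable_iUnion fun n => (t m n).countable_toSet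
  · rw [mem_closure_cp]
    intro s ε hε
    obtain ⟨n, hn⟩ := exists_nat_gt (1 / ε)
    have hlt : 1 / ((n : ℝ) + 1) < ε := by
      have h1 : 1 / ε < (n : ℝ) + 1 := hn.trans (lt_add_one _)
      rw [div_lt_iff₀ hε] at h1
      rw [div_lt_iff₀ (by positivity)]
      linarith
    obtain ⟨g, hgt, hgv⟩ := htc s.card n (fun i => (s.equivFin.symm i).1)
    refine ⟨g, ?_, fun x hx => ?_⟩
    · simp only [Set.mem_iUnion]
      exact ⟨s.card, n, hgt⟩
    · have hxv : x = (s.equivFin.symm (s.equivFin ⟨x, hx⟩)).1 := by simp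
      rw [hxv]
      exact (hgv _).trans hlt

end Closure

section Transfer

variable {X : Type u} [TopologicalSpace X]

/-- countable closure transfer: countable closures agree between the two topologies -/
theorem key_transfer [CompactSpace X] (hτ : ℵ₀ < Ordinal.cof τ)
    {B : Set (Cp (X × ↥(Set.Iic τ)))} (hBc : B.Countable) {f : Cp (X × ↥(Set.Iic τ))}
    (hf : res f ∈ closure (res '' B)) : f ∈ closure B := by
  classical
  obtain ⟨uf, huf⟩ := (hBc.insert f).exists_eq_range (insert_nonempty _ _)
  have hu : insert f B ⊆ Set.range uf := huf.subset
  choose βm hβm using fun n => stabIic hτ (uf n)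
  have hb : (⨆ n, (βm n).1) < τ := sup_lt hτ _ fun n => (βm n).2
  have hba : BddAbove (Set.range fun n => (βm n).1) :=
    ⟨τ, forall_mem_range.2 fun n => (βm n).2.le⟩
  set b : ↥(Set.Iio τ) := ⟨_, hb⟩ with hbdef
  have hstab : ∀ g ∈ insert f B, ∀ a : ↥(Set.Iic τ), b.1 ≤ a.1 → ∀ x,
      g.1 (x, a) = g.1 (x, ⟨b.1, mem_Iic_of_mem_Iio b.2⟩) := by
    intro g hg a ha x
    obtain ⟨n, rfl⟩ := hu hg
    have h1 := hβm n a (le_trans (le_ciSup hba n) ha) x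
    have h2 := hβm n ⟨b.1, mem_Iic_of_mem_Iio b.2⟩ (le_ciSup hba n) x
    rw [h1, h2]
  rw [mem_closure_cp] at hf ⊢
  intro s ε hε
  obtain ⟨g', hg'B, hg'⟩ := hf (s.image (fun p => (p.1, mm b p.2))) ε hε
  obtain ⟨g, hgB, rfl⟩ := hg'B
  refine ⟨g, hgB, fun p hp => ?_⟩
  have hrew : ∀ k : Cp (X × ↥(Set.Iic τ)), k ∈ insert f B →
      k.1 p = (res k).1 (p.1, mm b p.2) := by
    intro k hk
    show k.1 p = k.1 (emb (p.1, mm b p.2))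
    rcases le_or_gt p.2.1 b.1 with h | h
    · have h1 : emb ((p.1, mm b p.2) : X × ↥(Set.Iio τ)) = (p.1, p.2) := by
        simp only [emb, mm]
        exact Prod.ext rfl (Subtype.ext (min_eq_left h))
      rw [h1]
    · have h1 : emb ((p.1, mm b p.2) : X × ↥(Set.Iio τ)) =
          (p.1, (⟨b.1, mem_Iic_of_mem_Iio b.2⟩ : ↥(Set.Iic τ))) := by
        simp only [emb, mm]
        exact Prod.ext rfl (Subtype.ext (min_eq_right h.le))
      rw [h1]
      exact hstab k hk p.2 h.le p.1
  rw [hrew f (mem_insert _ _), hrew g (mem_insert_of_mem _ hgB)]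
  exact hg' _ (Finset.mem_image_of_mem _ hp)

/-- main continuity lemma -/
theorem cont_phi {Y : Type u} [TopologicalSpace Y] [CompactSpace X] [CompactSpace Y]
    [CompactSpace ↥(Set.Iic τ)]
    (hτ : ℵ₀ < Ordinal.cof τ) (hfun : Cp (X × ↥(Set.Iio τ)) → Cp (Y × ↥(Set.Iio τ)))
    (hc : Continuous hfun) (Φ : Cp (X × ↥(Set.Iic τ)) → Cp (Y × ↥(Set.Iic τ)))
    (hΦ : ∀ f, res (Φ f) = hfun (res f)) : Continuous Φ := by
  rw [continuous_iff_isClosed]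
  intro A hA
  apply isClosed_of_closure_subset
  intro f hf
  obtain ⟨B, hBsub, hBc, hfB⟩ := tight hf
  have h1 : res f ∈ closure (res '' B) :=
    image_closure_subset_closure_image continuous_res ⟨f, hfB, rfl⟩
  have h2 : hfun (res f) ∈ closure (hfun '' (res '' B)) :=
    image_closure_subset_closure_image hc ⟨res f, h1, rfl⟩
  have himg : hfun '' (res '' B) = res '' (Φ '' B) := by
    rw [← Set.image_comp, ← Set.image_comp]
    apply Set.image_congr
    intro g _
    exact (hΦ g).symm
  rw [himg, ← hΦ] at h2
  have h4 : Φ f ∈ closure (Φ '' B) := key_transfer hτ (hBc.image Φ) h2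
  have h5 : Φ '' B ⊆ A := Set.image_subset_iff.2 hBsub
  exact hA.closure_subset (closure_mono h5 h4)

end Transfer

theorem compactIic (τ : Ordinal.{u}) : CompactSpace ↥(Set.Iic τ) := by
  rw [← isCompact_iff_compactSpace]
  have h : Set.Iic τ = Set.Icc 0 τ := (Set.Icc_bot (a := τ)).symm
  rw [h]
  exact isCompact_Icc

end Statement6Aux

/-- Let `X`, `Y` be compact Hausdorff spaces and let `τ` be an ordinal of
uncountable cofinality. If `Cp (X × [0,τ))` is homeomorphic to `Cp (Y × [0,τ))`, then
`Cp (X × [0,τ])` is homeomorphic to `Cp (Y × [0,τ])`. -/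
theorem statement6 (X Y : Type u) [TopologicalSpace X] [TopologicalSpace Y]
    [CompactSpace X] [T2Space X] [CompactSpace Y] [T2Space Y]
    (τ : Ordinal.{u}) (hτ : ℵ₀ < Ordinal.cof τ)
    (h : Nonempty (Cp (X × Set.Iio τ) ≃ₜ Cp (Y × Set.Iio τ))) :
    Nonempty (Cp (X × Set.Iic τ) ≃ₜ Cp (Y × Set.Iic τ)) := by
  classical
  obtain ⟨e⟩ := h
  haveI : CompactSpace ↥(Set.Iic τ) := Statement6Aux.compactIic τ
  have hsurjX : Function.Surjective (Statement6Aux.res (X := X) (τ := τ)) :=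
    Statement6Aux.res_surj hτ
  have hsurjY : Function.Surjective (Statement6Aux.res (X := Y) (τ := τ)) :=
    Statement6Aux.res_surj hτ
  have hinjX : Function.Injective (Statement6Aux.res (X := X) (τ := τ)) :=
    Statement6Aux.res_inj hτ
  have hinjY : Function.Injective (Statement6Aux.res (X := Y) (τ := τ)) :=
    Statement6Aux.res_inj hτ
  set invX := Function.surjInv hsurjX with hinvX
  set invY := Function.surjInv hsurjY with hinvY
  have hriX : ∀ g, Statement6Aux.res (invX g) = g :=
    Function.rightInverse_surjInv hsurjX
  have hriY : ∀ g, Statement6Aux.res (invY g) = g :=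
    Function.rightInverse_surjInv hsurjY
  set Φ : Cp (X × ↥(Set.Iic τ)) → Cp (Y × ↥(Set.Iic τ)) :=
    fun f => invY (e (Statement6Aux.res f)) with hΦdef
  set Ψ : Cp (Y × ↥(Set.Iic τ)) → Cp (X × ↥(Set.Iic τ)) :=
    fun g => invX (e.symm (Statement6Aux.res g)) with hΨdef
  have hΦ : ∀ f, Statement6Aux.res (Φ f) = e (Statement6Aux.res f) := fun f => hriY _
  have hΨ : ∀ g, Statement6Aux.res (Ψ g) = e.symm (Statement6Aux.res g) := fun g => hriX _
  have hleft : Function.LeftInverse Ψ Φ := by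
    intro f
    apply hinjX
    rw [hΨ, hΦ, Homeomorph.symm_apply_apply]
  have hright : Function.RightInverse Ψ Φ := by
    intro g
    apply hinjY
    rw [hΦ, hΨ, Homeomorph.apply_symm_apply]
  exact ⟨{ toFun := Φ, invFun := Ψ, left_inv := hleft, right_inv := hright,
           continuous_toFun := Statement6Aux.cont_phi hτ e e.continuous Φ hΦ,
           continuous_invFun := Statement6Aux.cont_phi hτ e.symm e.symm.continuous Ψ hΨ }⟩
end

section
/- Let τ be a regular uncountable cardinal and let Y be an infinite topological space with a dense subset of cardinality less than τ. Let S ⊆ C_p(Y × [0,τ)) be a subset that (in the subspace topology) has a dense subset of cardinality less than τ. Then there exists an ordinal α < τ such that every f ∈ S is constant on {y} × [α,τ) for every y ∈ Y. -/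
open Cardinal Set

universe u

/-- Any continuous real-valued function on `[0, o)` with `o` of uncountable cofinality
is eventually constant. -/
theorem eventuallyConstAux {o : Ordinal.{u}} (ho : ℵ₀ < o.cof)
    (g : Set.Iio o → ℝ) (hg : Continuous g) :
    ∃ α < o, ∀ a b : Set.Iio o, α ≤ a.1 → α ≤ b.1 → g a = g b := by
  have hopos : (0 : Ordinal) < o := by
    rcases eq_zero_or_pos o with h | h
    · rw [h, Ordinal.cof_zero] at ho; exact absurd ho (by simp)
    · exact h
  have hmkN : Cardinal.lift.{u} #ℕ < o.cof := by
    simpa using ho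
  have A : ∀ ε : ℝ, 0 < ε → ∃ α, α < o ∧
      ∀ a b : Set.Iio o, α ≤ a.1 → α ≤ b.1 → |g a - g b| ≤ ε := by
    intro ε hε
    by_contra hcon
    push_neg at hcon
    have key : ∀ β : Set.Iio o, ∃ a : Set.Iio o, β ≤ a ∧ ε / 2 < |g a - g β| := by
      intro β
      obtain ⟨a, b, ha, hb, hab⟩ := hcon β.1 β.2
      rcases le_or_gt (|g a - g β|) (ε / 2) with h | h
      · refine ⟨b, Subtype.coe_le_coe.1 hb, ?_⟩
        have htri : |g a - g b| ≤ |g a - g β| + |g β - g b| := abs_sub_le _ _ _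
        have : |g β - g b| = |g b - g β| := abs_sub_comm _ _
        linarith
      · exact ⟨a, Subtype.coe_le_coe.1 ha, h⟩
    choose F hF1 hF2 using key
    set z : Set.Iio o := ⟨0, hopos⟩ with hz
    set x : ℕ → Set.Iio o := fun n => F^[n] z with hxdef
    have hxsucc : ∀ n, x (n + 1) = F (x n) := fun n => Function.iterate_succ_apply' F n z
    have hmono : Monotone x := monotone_nat_of_le_succ (fun n => by rw [hxsucc]; exact hF1 _)
    have hs : (⨆ n, (x n).1) < o :=
      Ordinal.iSup_lt_ord_lift hmkN (fun n => (x n).2)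
    set s : Set.Iio o := ⟨⨆ n, (x n).1, hs⟩ with hsdef
    have hlub : IsLUB (Set.range x) s := by
      constructor
      · rintro _ ⟨n, rfl⟩
        exact Subtype.coe_le_coe.1 (le_ciSup (Ordinal.bddAbove_range _) n)
      · rintro c hc
        have : ∀ n, (x n).1 ≤ c.1 := fun n => Subtype.coe_le_coe.2 (hc ⟨n, rfl⟩)
        exact Subtype.coe_le_coe.1 (ciSup_le this)
    have hx : Filter.Tendsto x Filter.atTop (nhds s) := tendsto_atTop_isLUB hmono hlub
    have hgx : Filter.Tendsto (fun n => g (x n)) Filter.atTop (nhds (g s)) :=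
      (hg.tendsto s).comp hx
    rw [Metric.tendsto_atTop] at hgx
    obtain ⟨N, hN⟩ := hgx (ε / 4) (by linarith)
    have h1 := hN N (le_refl N)
    have h2 := hN (N + 1) (Nat.le_succ N)
    rw [Real.dist_eq] at h1 h2
    have h3 : ε / 2 < |g (x (N + 1)) - g (x N)| := by rw [hxsucc]; exact hF2 (x N)
    have htri : |g (x (N + 1)) - g (x N)| ≤ |g (x (N + 1)) - g s| + |g s - g (x N)| :=
      abs_sub_le _ _ _
    have : |g s - g (x N)| = |g (x N) - g s| := abs_sub_comm _ _
    linarith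
  have B := fun n : ℕ => A (1 / ((n : ℝ) + 1)) (by positivity)
  choose β hβo hβ using B
  refine ⟨⨆ n, β n, Ordinal.iSup_lt_ord_lift hmkN hβo, ?_⟩
  intro a b ha hb
  have H : ∀ n : ℕ, |g a - g b| ≤ 1 / ((n : ℝ) + 1) := fun n =>
    hβ n a b ((le_ciSup (Ordinal.bddAbove_range _) n).trans ha)
      ((le_ciSup (Ordinal.bddAbove_range _) n).trans hb)
  have habs : |g a - g b| ≤ 0 := by
    by_contra hcon
    push_neg at hcon
    obtain ⟨n, hn⟩ := exists_nat_one_div_lt hcon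
    exact absurd (H n) (by push_neg; exact hn)
  have := le_antisymm habs (abs_nonneg _)
  exact sub_eq_zero.1 (abs_eq_zero.1 this)

/-- Let `τ` be a regular uncountable cardinal and `Y` an infinite space with
a dense subset of cardinality `< τ`. If `S ⊆ Cp (Y × [0,τ))` has (in the subspace
topology) a dense subset of cardinality `< τ`, then there is `α < τ` such that every
`f ∈ S` is constant on `{y} × [α,τ)` for every `y ∈ Y`. -/
theorem statement9 (τ : Cardinal.{u}) (hreg : τ.IsRegular) (hunc : ℵ₀ < τ)
    (Y : Type u) [TopologicalSpace Y] [Infinite Y]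
    (DY : Set Y) (hDY : Dense DY) (hDYcard : #DY < τ)
    (S : Set (Cp (Y × Set.Iio τ.ord)))
    (D : Set S) (hD : Dense D) (hDcard : #D < Cardinal.lift.{u + 1} τ) :
    ∃ α < τ.ord, ∀ f ∈ S, ∀ (y : Y) (a b : Set.Iio τ.ord),
      α ≤ a.1 → α ≤ b.1 → f.1 (y, a) = f.1 (y, b) := by
  have hcof : τ.ord.cof = τ := hreg.cof_eq
  have ho : ℵ₀ < τ.ord.cof := by rw [hcof]; exact hunc
  -- every continuous function is eventually constant on each vertical line, uniformly in y
  have A1 : ∀ g : Cp (Y × Set.Iio τ.ord), ∃ α < τ.ord,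
      ∀ (y : Y) (a b : Set.Iio τ.ord), α ≤ a.1 → α ≤ b.1 → g.1 (y, a) = g.1 (y, b) := by
    intro g
    have step : ∀ y : Y, ∃ α < τ.ord, ∀ a b : Set.Iio τ.ord,
        α ≤ a.1 → α ≤ b.1 → g.1 (y, a) = g.1 (y, b) := fun y =>
      eventuallyConstAux ho (fun b => g.1 (y, b)) (g.2.comp (Continuous.prodMk_right y))
    choose βf hβo hβ using fun y : DY => step y.1
    refine ⟨⨆ y, βf y, Ordinal.iSup_lt_ord (hDYcard.trans_eq hcof.symm) hβo, ?_⟩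
    intro y a b ha hb
    have h1 : Continuous fun y' : Y => g.1 (y', a) :=
      g.2.comp (continuous_id.prodMk continuous_const)
    have h2 : Continuous fun y' : Y => g.1 (y', b) :=
      g.2.comp (continuous_id.prodMk continuous_const)
    have heq : Set.EqOn (fun y' : Y => g.1 (y', a)) (fun y' : Y => g.1 (y', b)) DY := by
      intro y' hy'
      exact hβ ⟨y', hy'⟩ a b ((le_ciSup (Ordinal.bddAbove_range _) ⟨y', hy'⟩).trans ha)
        ((le_ciSup (Ordinal.bddAbove_range _) ⟨y', hy'⟩).trans hb)
    exact congrFun (h1.ext_on hDY h2 heq) y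
  choose αf hαfo hαf using A1
  -- shrink D to a Type u index
  obtain ⟨c, hc, hceq⟩ := Cardinal.lt_lift_iff.1 hDcard
  have hequiv : Nonempty (c.out ≃ ↥D) := by
    rw [← Cardinal.lift_mk_eq']
    rw [Cardinal.mk_out]
    simp [hceq]
    exact (Cardinal.lift_id'.{u, u + 1} _).symm
  obtain ⟨e⟩ := hequiv
  set α := ⨆ w : c.out, αf ((e w : ↥S) : Cp (Y × Set.Iio τ.ord)) with hα
  have hαlt : α < τ.ord :=
    Ordinal.iSup_lt_ord (by rw [Cardinal.mk_out, hcof]; exact hc) (fun w => hαfo _)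
  refine ⟨α, hαlt, ?_⟩
  intro f hf y a b ha hb
  set C : Set ↥S := {h : ↥S | (h : Cp (Y × Set.Iio τ.ord)).1 (y, a)
      = (h : Cp (Y × Set.Iio τ.ord)).1 (y, b)} with hC
  have hevc : ∀ p : Y × Set.Iio τ.ord, Continuous fun h : ↥S =>
      (h : Cp (Y × Set.Iio τ.ord)).1 p := fun p =>
    (continuous_apply p).comp (continuous_subtype_val.comp continuous_subtype_val)
  have hCclosed : IsClosed C := isClosed_eq (hevc (y, a)) (hevc (y, b))
  have hDC : D ⊆ C := by
    intro d hd
    have hle : αf (d : Cp (Y × Set.Iio τ.ord)) ≤ α := by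
      have h := le_ciSup (Ordinal.bddAbove_range
        (fun w : c.out => αf ((e w : ↥S) : Cp (Y × Set.Iio τ.ord)))) (e.symm ⟨d, hd⟩)
      rwa [Equiv.apply_symm_apply] at h
    exact hαf _ y a b (hle.trans ha) (hle.trans hb)
  have : closure D ⊆ C := hCclosed.closure_subset_iff.2 hDC
  exact this (hD ⟨f, hf⟩)
end

section
/- Let X be a topological space, let τ be an ordinal, and let (α_n)_{n∈ℕ} be a strictly increasing sequence of ordinals with supremum μ < τ. For an ordinal β ≤ τ, let F(X,β) denote the set of continuous real-valued functions f on X × [0,τ) such that for every x ∈ X, f is constant on {x} × [β,τ). Then the closure of ⋃_{n∈ℕ} F(X,α_n) in C_p(X × [0,τ)) equals F(X,μ). -/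
/-!
Replacing the second coordinate `t` by `min t β` retracts `X × [0,τ)` onto `X × [0,β]`, so
precomposing with it sends every `f` into `F(X,β)`. If `f ∈ F(X,μ)` then `f (x, min t μ) = f (x, t)`,
and as `α n → μ` the continuity of `min` and of `f` makes `f (x, min t (α n))` converge to
`f (x, t)`. Conversely `F(X,μ)` is closed in `C_p` (an intersection of equalizers of evaluations)
and contains every `F(X,α n)`.
-/

open Cardinal Set

universe u

open Filter Topology

section ConstOnIci

variable {L : Type*} [LinearOrder L] {S : Set L}

def truncateAt (hS : IsLowerSet S) (β : L) (t : S) : S :=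
  ⟨min t β, hS (min_le_left _ _) t.2⟩

lemma truncateAt_eq_self_of_le (hS : IsLowerSet S) {β : L} {t : S} (ht : t.1 ≤ β) :
    truncateAt hS β t = t :=
  Subtype.ext (min_eq_left ht)

lemma truncateAt_val_of_ge (hS : IsLowerSet S) {β : L} {t : S} (ht : β ≤ t.1) :
    (truncateAt hS β t).1 = β :=
  min_eq_right ht

variable [TopologicalSpace L] (X : Type*) [TopologicalSpace X]

/-- The set `F(X,β)` of the paper, for `S = [0,τ)`. -/
def constOnIci (S : Set L) (β : L) : Set (Cp (X × S)) :=
  {f | ∀ (x : X) (a b : S), β ≤ a.1 → β ≤ b.1 → f.1 (x, a) = f.1 (x, b)}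

variable {X}

lemma constOnIci_mono {β γ : L} (h : β ≤ γ) : constOnIci X S β ⊆ constOnIci X S γ :=
  fun _ hf x a b ha hb => hf x a b (h.trans ha) (h.trans hb)

lemma isClosed_constOnIci (β : L) : IsClosed (constOnIci X S β) := by
  have heval (p : X × S) : Continuous fun f : Cp (X × S) => f.1 p :=
    (continuous_apply p).comp continuous_subtype_val
  simp only [constOnIci, ofPred_forall]
  exact isClosed_iInter fun x => isClosed_iInter fun a => isClosed_iInter fun b =>
    isClosed_iInter fun _ => isClosed_iInter fun _ => isClosed_eq (heval (x, a)) (heval (x, b))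

lemma apply_truncateAt_of_mem_constOnIci (hS : IsLowerSet S) {μ : L} {f : Cp (X × S)}
    (hf : f ∈ constOnIci X S μ) (x : X) (t : S) : f.1 (x, truncateAt hS μ t) = f.1 (x, t) := by
  rcases le_total t.1 μ with ht | ht
  · rw [truncateAt_eq_self_of_le hS ht]
  · exact hf x _ t (truncateAt_val_of_ge hS ht).ge ht

variable [OrderClosedTopology L]

lemma continuous_truncateAt (hS : IsLowerSet S) (β : L) : Continuous (truncateAt hS β) :=
  (continuous_subtype_val.min continuous_const).subtype_mk _

lemma tendsto_truncateAt (hS : IsLowerSet S) {ι : Type*} {l : Filter ι} {β : ι → L} {μ : L}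
    (hβ : Tendsto β l (𝓝 μ)) (t : S) :
    Tendsto (fun i => truncateAt hS (β i) t) l (𝓝 (truncateAt hS μ t)) :=
  tendsto_subtype_rng.2 (tendsto_const_nhds.min hβ)

def truncate (hS : IsLowerSet S) (β : L) (f : Cp (X × S)) : Cp (X × S) :=
  ⟨fun p => f.1 (p.1, truncateAt hS β p.2),
    f.2.comp (continuous_fst.prodMk ((continuous_truncateAt hS β).comp continuous_snd))⟩

lemma truncate_mem_constOnIci (hS : IsLowerSet S) (β : L) (f : Cp (X × S)) :
    truncate hS β f ∈ constOnIci X S β := by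
  intro x a b ha hb
  change f.1 (x, truncateAt hS β a) = f.1 (x, truncateAt hS β b)
  rw [Subtype.ext ((truncateAt_val_of_ge hS ha).trans (truncateAt_val_of_ge hS hb).symm)]

lemma tendsto_truncate (hS : IsLowerSet S) {ι : Type*} {l : Filter ι} {β : ι → L} {μ : L}
    (hβ : Tendsto β l (𝓝 μ)) {f : Cp (X × S)} (hf : f ∈ constOnIci X S μ) :
    Tendsto (fun i => truncate hS (β i) f) l (𝓝 f) := by
  refine tendsto_subtype_rng.2 (tendsto_pi_nhds.2 fun ⟨x, t⟩ => ?_)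
  rw [← apply_truncateAt_of_mem_constOnIci hS hf x t]
  exact (f.2.comp (Continuous.prodMk_right x)).continuousAt.tendsto.comp
    (tendsto_truncateAt hS hβ t)

theorem closure_iUnion_constOnIci (hS : IsLowerSet S) {ι : Type*} {l : Filter ι} [l.NeBot]
    {β : ι → L} {μ : L} (hβμ : ∀ i, β i ≤ μ) (hβ : Tendsto β l (𝓝 μ)) :
    closure (⋃ i, constOnIci X S (β i)) = constOnIci X S μ := by
  refine (closure_minimal (iUnion_subset fun i => constOnIci_mono (hβμ i))
    (isClosed_constOnIci μ)).antisymm fun f hf => ?_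
  exact mem_closure_of_tendsto (tendsto_truncate hS hβ hf)
    (Eventually.of_forall fun i => mem_iUnion.2 ⟨i, truncate_mem_constOnIci hS (β i) f⟩)

end ConstOnIci

theorem statement10_general (X : Type u) [TopologicalSpace X] (τ : Ordinal.{u})
    (α : ℕ → Ordinal.{u}) (hmono : StrictMono α)
    (μ : Ordinal.{u}) (hsup : μ = ⨆ n, α n) :
    closure (⋃ n : ℕ, {f : Cp (X × Set.Iio τ) |
        ∀ (x : X) (a b : Set.Iio τ), α n ≤ a.1 → α n ≤ b.1 → f.1 (x, a) = f.1 (x, b)})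
      = {f : Cp (X × Set.Iio τ) |
        ∀ (x : X) (a b : Set.Iio τ), μ ≤ a.1 → μ ≤ b.1 → f.1 (x, a) = f.1 (x, b)} := by
  subst hsup
  exact closure_iUnion_constOnIci (isLowerSet_Iio τ) (Ordinal.le_iSup α)
    (tendsto_atTop_ciSup hmono.monotone Ordinal.bddAbove_of_small)

/-- Let `X` be a space, `τ` an ordinal and `(α_n)` a strictly increasing
sequence of ordinals with supremum `μ < τ`. Writing `F(X,β)` for the set of continuous
real-valued functions on `X × [0,τ)` constant on `{x} × [β,τ)` for every `x`, the closure
of `⋃ n, F(X,α_n)` in `Cp (X × [0,τ))` equals `F(X,μ)`. -/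
theorem statement10 (X : Type u) [TopologicalSpace X] (τ : Ordinal.{u})
    (α : ℕ → Ordinal.{u}) (hmono : StrictMono α)
    (μ : Ordinal.{u}) (hsup : μ = ⨆ n, α n) (hμτ : μ < τ) :
    closure (⋃ n : ℕ, {f : Cp (X × Set.Iio τ) |
        ∀ (x : X) (a b : Set.Iio τ), α n ≤ a.1 → α n ≤ b.1 → f.1 (x, a) = f.1 (x, b)})
      = {f : Cp (X × Set.Iio τ) |
        ∀ (x : X) (a b : Set.Iio τ), μ ≤ a.1 → μ ≤ b.1 → f.1 (x, a) = f.1 (x, b)} :=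
  statement10_general X τ α hmono μ hsup
end

section
/- Let κ be an infinite cardinal and let X be a Tychonoff space admitting a network of cardinality at most κ. Then C_p(X) has a dense subset of cardinality at most κ. -/
open Cardinal Set

universe u

/-- A network for a space: a family of (not necessarily open) sets such that every open
neighbourhood of every point contains a member of the family containing that point. -/
def IsNetwork {X : Type*} [TopologicalSpace X] (N : Set (Set X)) : Prop :=
  ∀ x : X, ∀ U : Set X, IsOpen U → x ∈ U → ∃ s ∈ N, x ∈ s ∧ s ⊆ U

/-- Let `κ` be an infinite cardinal and `X` a Tychonoff space with a network
of cardinality at most `κ`. Then `Cp X` has a dense subset of cardinality at most `κ`. -/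
theorem statement11 (κ : Cardinal.{u}) (hκ : ℵ₀ ≤ κ)
    (X : Type u) [TopologicalSpace X] [T35Space X]
    (hX : ∃ N : Set (Set X), IsNetwork N ∧ #N ≤ κ) :
    ∃ D : Set (Cp X), Dense D ∧ #D ≤ κ := by
  classical
  obtain ⟨N, hN, hNκ⟩ := hX
  let P : List (↥N × ℚ × ℚ) → Cp X → Prop :=
    fun l f => ∀ p ∈ l, ∀ x ∈ (p.1 : Set X), |f.val x - (p.2.1 : ℝ)| < (p.2.2 : ℝ)
  let g : List (↥N × ℚ × ℚ) → Cp X :=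
    fun l => if h : ∃ f : Cp X, P l f then h.choose else ⟨fun _ => 0, continuous_const⟩
  refine ⟨Set.range g, ?_, ?_⟩
  · rw [dense_iff_inter_open]
    rintro U hU ⟨f, hfU⟩
    rw [isOpen_induced_iff] at hU
    obtain ⟨V, hV, rfl⟩ := hU
    obtain ⟨I, u, hu, hpi⟩ := isOpen_pi_iff.mp hV f.val hfU
    have key : ∀ x ∈ I, ∃ (q ε' : ℚ) (s : Set X), (0 : ℝ) < ε' ∧ s ∈ N ∧ x ∈ s ∧
        (∀ y ∈ s, |f.val y - (q : ℝ)| < 2 * ε') ∧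
        (∀ r : ℝ, |r - (q : ℝ)| < 2 * ε' → r ∈ u x) := by
      intro x hx
      obtain ⟨hux, hfx⟩ := hu x hx
      obtain ⟨ε, hε, hball⟩ := Metric.isOpen_iff.mp hux _ hfx
      obtain ⟨ε', hε'0, hε'⟩ := exists_rat_btwn (show (0 : ℝ) < ε / 3 by positivity)
      have hε'0' : (0 : ℝ) < ε' := hε'0
      obtain ⟨q, hq⟩ := exists_rat_near (f.val x) hε'0'
      obtain ⟨s, hsN, hxs, hs⟩ := hN x (f.val ⁻¹' Metric.ball (f.val x) ε')
        (Metric.isOpen_ball.preimage f.property)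
        (by simp [Metric.mem_ball, hε'0'])
      refine ⟨q, ε', s, hε'0', hsN, hxs, ?_, ?_⟩
      · intro y hy
        have h1 : |f.val y - f.val x| < ε' := by
          have := hs hy
          simpa [Metric.mem_ball, Real.dist_eq] using this
        calc |f.val y - (q : ℝ)| ≤ |f.val y - f.val x| + |f.val x - (q : ℝ)| := by
              have := abs_sub_abs_le_abs_sub (f.val y) (f.val x)
              exact abs_sub_le _ _ _
          _ < ε' + ε' := by exact add_lt_add h1 hq
          _ = 2 * ε' := by ring
      · intro r hr
        apply hball
        rw [Metric.mem_ball, Real.dist_eq]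
        calc |r - f.val x| ≤ |r - (q : ℝ)| + |(q : ℝ) - f.val x| := abs_sub_le _ _ _
          _ < 2 * ε' + ε' := by
              refine add_lt_add hr ?_
              rwa [abs_sub_comm]
          _ = 3 * ε' := by ring
          _ < ε := by linarith
    choose q ε' s hε'pos hsN hxs hfar hnear using key
    let l : List (↥N × ℚ × ℚ) := I.attach.toList.map
      (fun x => (⟨s x.1 x.2, hsN x.1 x.2⟩, q x.1 x.2, 2 * ε' x.1 x.2))
    have hPf : P l f := by
      intro p hp x hx
      simp only [l, List.mem_map] at hp
      obtain ⟨a, _, rfl⟩ := hp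
      have := hfar a.1 a.2 x hx
      push_cast
      exact this
    have hex : ∃ h : Cp X, P l h := ⟨f, hPf⟩
    have hgl : P l (g l) := by
      have : g l = hex.choose := dif_pos hex
      rw [this]
      exact hex.choose_spec
    refine ⟨g l, ?_, Set.mem_range_self l⟩
    show (g l).val ∈ V
    apply hpi
    intro x hx
    have hmem : ((⟨s x hx, hsN x hx⟩, q x hx, 2 * ε' x hx) : ↥N × ℚ × ℚ) ∈ l := by
      simp only [l, List.mem_map]
      exact ⟨⟨x, hx⟩, by simp, rfl⟩
    have h1 := hgl _ hmem x (hxs x hx)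
    apply hnear x hx
    simpa using h1
  · calc #(Set.range g) ≤ #(List (↥N × ℚ × ℚ)) := Cardinal.mk_range_le
      _ ≤ max ℵ₀ #(↥N × ℚ × ℚ) := Cardinal.mk_list_le_max _
      _ ≤ κ := by
          apply max_le hκ
          rw [Cardinal.mk_prod]
          have h1 : Cardinal.lift.{0} #↥N ≤ κ := by simpa using hNκ
          have h2 : (Cardinal.lift.{u} #(ℚ × ℚ) : Cardinal) ≤ κ := by
            calc Cardinal.lift.{u} #(ℚ × ℚ) ≤ Cardinal.lift.{u} ℵ₀ :=
                  Cardinal.lift_le.mpr Cardinal.mk_le_aleph0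
              _ = ℵ₀ := Cardinal.lift_aleph0
              _ ≤ κ := hκ
          calc Cardinal.lift.{0} #↥N * Cardinal.lift.{u} #(ℚ × ℚ)
              ≤ κ * κ := mul_le_mul' h1 h2
            _ = κ := Cardinal.mul_eq_self hκ
end

section
/- Let X be a Lindelöf topological space, let τ be an infinite cardinal, and let f be a continuous real-valued function on X × A(τ). Then there exists a countable subset A of the underlying discrete set of A(τ) such that f(x,β) = f(x,∞) for every x ∈ X and every point β of A(τ) with β ∉ A ∪ {∞}. -/
open Cardinal Set

universe u

lemma aux13 {X : Type u} [TopologicalSpace X] [LindelofSpace X]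
    {D : Type u} [TopologicalSpace D] [DiscreteTopology D]
    (f : X × OnePoint D → ℝ) (hf : Continuous f) {ε : ℝ} (hε : 0 < ε) :
    ∃ A : Set D, A.Countable ∧
      ∀ (x : X) (β : D), β ∉ A → dist (f (x, (β : OnePoint D))) (f (x, OnePoint.infty)) < ε := by
  have key : ∀ x : X, ∃ U : Set X, U ∈ nhds x ∧ ∃ F : Set D, F.Finite ∧
      ∀ y ∈ U, ∀ z : OnePoint D, (∀ β : D, z = β → β ∉ F) →
        dist (f (y, z)) (f (x, OnePoint.infty)) < ε / 2 := by
    intro x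
    have hc : ContinuousAt f (x, OnePoint.infty) := hf.continuousAt
    have hb : f ⁻¹' Metric.ball (f (x, OnePoint.infty)) (ε / 2) ∈ nhds (x, OnePoint.infty) :=
      hc (Metric.ball_mem_nhds _ (by linarith))
    rw [mem_nhds_prod_iff] at hb
    obtain ⟨U, hU, W, hW, hUW⟩ := hb
    rw [OnePoint.nhds_infty_eq, Filter.coclosedCompact_eq_cocompact,
      Filter.cocompact_eq_cofinite] at hW
    obtain ⟨hW1, hW2⟩ := hW
    refine ⟨U, hU, {β : D | (β : OnePoint D) ∈ W}ᶜ, ?_, ?_⟩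
    · exact (by simpa [Filter.mem_cofinite] using hW1 : (OnePoint.some ⁻¹' W)ᶜ.Finite)
    · intro y hy z hz
      have hzW : z ∈ W := by
        cases z with
        | infty => simpa using hW2
        | coe β =>
          have := hz β rfl
          simpa using not_not.mp (by simpa using this)
      have : (y, z) ∈ U ×ˢ W := ⟨hy, hzW⟩
      have := hUW this
      simpa [Metric.mem_ball] using this
  choose U hU F hF hUF using key
  obtain ⟨t, htc, hcov⟩ := LindelofSpace.elim_nhds_subcover U hU
  refine ⟨⋃ x ∈ t, F x, htc.biUnion fun x _ => (hF x).countable, ?_⟩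
  intro x β hβ
  have hx : x ∈ ⋃ y ∈ t, U y := hcov ▸ mem_univ x
  obtain ⟨x₀, hx₀t, hxU⟩ := mem_iUnion₂.mp hx
  have hβF : β ∉ F x₀ := fun h => hβ (mem_iUnion₂.mpr ⟨x₀, hx₀t, h⟩)
  have h1 := hUF x₀ x hxU (β : OnePoint D) (by rintro γ hγ; rw [show γ = β from Option.some_injective _ hγ.symm]; exact hβF)
  have h2 := hUF x₀ x hxU OnePoint.infty (by rintro γ hγ; exact (OnePoint.infty_ne_coe γ hγ).elim)
  calc dist (f (x, (β : OnePoint D))) (f (x, OnePoint.infty))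
      ≤ dist (f (x, (β : OnePoint D))) (f (x₀, OnePoint.infty))
        + dist (f (x₀, OnePoint.infty)) (f (x, OnePoint.infty)) := dist_triangle _ _ _
    _ < ε / 2 + ε / 2 := add_lt_add h1 (dist_comm (f (x, OnePoint.infty)) _ ▸ h2)
    _ = ε := by ring

/-- Let `X` be a Lindelöf space, `τ` an infinite cardinal and `f` a
continuous real-valued function on `X × A(τ)`, where `A(τ)` is realized as the one-point
compactification `OnePoint D` of a discrete space `D` of cardinality `τ`. Then there is a
countable `A ⊆ D` such that `f (x, β) = f (x, ∞)` for every `x ∈ X` and every `β ∉ A`. -/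
theorem statement13 (X : Type u) [TopologicalSpace X] [LindelofSpace X]
    (τ : Cardinal.{u}) (hτ : ℵ₀ ≤ τ)
    (D : Type u) [TopologicalSpace D] [DiscreteTopology D] (hD : #D = τ)
    (f : X × OnePoint D → ℝ) (hf : Continuous f) :
    ∃ A : Set D, A.Countable ∧
      ∀ (x : X) (β : D), β ∉ A → f (x, (β : OnePoint D)) = f (x, OnePoint.infty) := by
  have h : ∀ n : ℕ, ∃ A : Set D, A.Countable ∧
      ∀ (x : X) (β : D), β ∉ A →
        dist (f (x, (β : OnePoint D))) (f (x, OnePoint.infty)) < 1 / (n + 1) :=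
    fun n => aux13 f hf (by positivity)
  choose A hAc hA using h
  refine ⟨⋃ n, A n, countable_iUnion hAc, ?_⟩
  intro x β hβ
  have : ∀ n : ℕ, β ∉ A n := fun n h => hβ (mem_iUnion.mpr ⟨n, h⟩)
  refine eq_of_forall_dist_le fun δ hδ => ?_
  obtain ⟨n, hn⟩ := exists_nat_one_div_lt hδ
  exact le_of_lt ((hA n x β (this n)).trans hn)
end

section
/- Let X be a compact topological space. Then every continuous real-valued function on the product space X × [0,ω₁) is bounded; that is, X × [0,ω₁) is pseudocompact. -/
open Cardinal Set
universe u

/-- Let `X` be a compact space. Then every continuous real-valued function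
on `X × [0,ω₁)` is bounded; that is, `X × [0,ω₁)` is pseudocompact. -/
theorem statement17 (X : Type u) [TopologicalSpace X] [CompactSpace X]
    (f : X × Set.Iio (Cardinal.aleph 1).ord → ℝ) (hf : Continuous f) :
    ∃ C : ℝ, ∀ p : X × Set.Iio (Cardinal.aleph 1).ord, |f p| ≤ C := by
  by_contra h
  push_neg at h
  choose p hp using fun n : ℕ => h n
  -- bound the second coordinates
  set β : Ordinal := ⨆ n : ℕ, ((p n).2 : Ordinal) with hβ
  have hβlt : β < (Cardinal.aleph 1).ord := by
    apply Ordinal.iSup_lt_ord_lift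
    · rw [(Cardinal.isRegular_aleph_one).cof_eq]
      simpa using Cardinal.aleph0_lt_aleph_one
    · exact fun n => (p n).2.2
  -- the set of ordinals ≤ β inside Iio ω₁ is compact
  have hS : IsCompact {o : Set.Iio (Cardinal.aleph 1).ord | (o : Ordinal) ≤ β} := by
    rw [Topology.IsEmbedding.isCompact_iff Topology.IsEmbedding.subtypeVal]
    have : Subtype.val '' {o : Set.Iio (Cardinal.aleph 1).ord | (o : Ordinal) ≤ β}
        = Set.Icc 0 β := by
      ext x
      simp only [Set.mem_image, Set.mem_setOf_eq, Set.mem_Icc, zero_le, true_and]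
      constructor
      · rintro ⟨y, hy, rfl⟩; exact hy
      · intro hx; exact ⟨⟨x, lt_of_le_of_lt hx hβlt⟩, hx, rfl⟩
    rw [this]
    exact isCompact_Icc
  have hK : IsCompact ((Set.univ : Set X) ×ˢ
      {o : Set.Iio (Cardinal.aleph 1).ord | (o : Ordinal) ≤ β}) :=
    isCompact_univ.prod hS
  obtain ⟨C, hC⟩ := (hK.image (continuous_abs.comp hf)).bddAbove
  obtain ⟨n, hn⟩ := exists_nat_gt C
  have hpn : p n ∈ (Set.univ : Set X) ×ˢ
      {o : Set.Iio (Cardinal.aleph 1).ord | (o : Ordinal) ≤ β} :=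
    ⟨trivial, le_ciSup (f := fun n : ℕ => ((p n).2 : Ordinal)) (Ordinal.bddAbove_range _) n⟩
  have h2 : |f (p n)| ≤ C := hC ⟨p n, hpn, rfl⟩
  have := hp n
  linarith
end
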